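/- arXiv:2504.16016 — 2 statements merged into one kernel-verified Lean document; each statement's English description precedes it below -/
import Mathlib

section
/- Let E be a finite-dimensional real inner product space, let T ≥ 3, let M > 0, and let F = (F₁, …, F_T) ∈ E^T be a tuple of vectors with ‖F_s‖ ≥ M for every s. Then for each fixed index t, the function mapping the single vector F_t (with all other components held fixed) to L_temporal(F₁, …, F_T) is differentiable at F_t, and its gradient satisfies ‖∇_{F_t} L_temporal‖ ≤ 16(T−2)/(M(T−1)), and in particular ‖∇_{F_t} L_temporal‖ ≤ 16/M. -/
/-!
The indices `s - 1, s, s + 1` of a summand are distinct, so each similarity in it depends on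
`v = F t` through at most one argument. The derivative of
`x ↦ Sim(x, G)` is `⟪G - (⟪x, G⟫ / ‖x‖²) x, ·⟫ / (‖x‖ ‖G‖)`, of norm at most `2 / ‖x‖`. As
`|Sim| ≤ 1`, each squared difference has derivative of norm at most
`2 · 2 · (2 / ‖F t‖ + 2 / ‖F t‖) = 16 / ‖F t‖`, and there are `T - 2` summands, weighted by
`1 / (T - 1)`.
-/

open scoped InnerProductSpace

/-- Cosine similarity `Sim(F, G) = ⟪F, G⟫ / (‖F‖ * ‖G‖)`. -/
noncomputable def sim {E : Type*} [NormedAddCommGroup E] [InnerProductSpace ℝ E]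
    (F G : E) : ℝ :=
  ⟪F, G⟫_ℝ / (‖F‖ * ‖G‖)

/-- Temporal consistency loss of a tuple `F = (F₁, …, F_T)` (here `0`-indexed as
`F 0, …, F (T-1)`, so the `1`-based sum `∑_{t=2}^{T-1}` becomes a sum over
`t ∈ Ico 1 (T-1)`):
`L(F) = (1/(T-1)) · ∑ (Sim(F_t, F_{t+1}) − Sim(F_{t−1}, F_t))²`. -/
noncomputable def temporalLoss {E : Type*} [NormedAddCommGroup E] [InnerProductSpace ℝ E]
    (T : ℕ) (hT : 0 < T) (F : Fin T → E) : ℝ :=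
  (1 / ((T : ℝ) - 1)) * ∑ t ∈ Finset.Ico 1 (T - 1),
    (sim (F ⟨t % T, Nat.mod_lt _ hT⟩) (F ⟨(t + 1) % T, Nat.mod_lt _ hT⟩)
      - sim (F ⟨(t - 1) % T, Nat.mod_lt _ hT⟩) (F ⟨t % T, Nat.mod_lt _ hT⟩)) ^ 2


section Similarity

variable {E : Type*} [NormedAddCommGroup E] [InnerProductSpace ℝ E]

theorem hasFDerivAt_norm {x : E} (hx : x ≠ 0) :
    HasFDerivAt (fun v : E => ‖v‖) (‖x‖⁻¹ • innerSL ℝ x) x := by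
  have h := (hasStrictFDerivAt_norm_sq x).hasFDerivAt.sqrt (pow_ne_zero 2 (norm_ne_zero_iff.2 hx))
  simp only [Real.sqrt_sq (norm_nonneg _)] at h
  refine h.congr_fderiv ?_
  rw [← Nat.cast_smul_eq_nsmul ℝ, Nat.cast_ofNat, smul_smul]
  congr 1
  field_simp

theorem hasFDerivAt_norm_inv {x : E} (hx : x ≠ 0) :
    HasFDerivAt (fun v : E => ‖v‖⁻¹) (-(‖x‖ ^ 3)⁻¹ • innerSL ℝ x) x := by
  refine ((hasDerivAt_inv (norm_ne_zero_iff.2 hx)).comp_hasFDerivAt x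
    (hasFDerivAt_norm hx)).congr_fderiv ?_
  rw [smul_smul]
  congr 1
  field_simp

noncomputable def simDerivLeft (x G : E) : E →L[ℝ] ℝ :=
  (‖x‖ * ‖G‖)⁻¹ • (innerSL ℝ G - (⟪x, G⟫_ℝ / ‖x‖ ^ 2) • innerSL ℝ x)

theorem hasFDerivAt_sim_left (G : E) {x : E} (hx : x ≠ 0) :
    HasFDerivAt (fun v : E => sim v G) (simDerivLeft x G) x := by
  have hinner : HasFDerivAt (fun v : E => ⟪v, G⟫_ℝ) (innerSL ℝ G) x :=
    (innerSL ℝ G).hasFDerivAt.congr_of_eventuallyEq (.of_forall fun v => real_inner_comm G v)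
  have hsim : (fun v : E => sim v G) = fun v => ⟪v, G⟫_ℝ * ‖v‖⁻¹ * ‖G‖⁻¹ := by
    funext v
    rw [sim, div_eq_mul_inv, mul_inv, mul_assoc]
  rw [hsim]
  refine ((hinner.mul (hasFDerivAt_norm_inv hx)).mul_const ‖G‖⁻¹).congr_fderiv ?_
  ext h
  simp only [simDerivLeft, smul_apply, sub_apply, add_apply, neg_apply, coe_innerSL_apply,
    smul_eq_mul, neg_smul, smul_neg, smul_add, mul_inv_rev]
  field_simp
  ring

theorem norm_simDerivLeft_le (x G : E) : ‖simDerivLeft x G‖ ≤ 2 / ‖x‖ := by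
  -- `simDerivLeft x G` vanishes when `x = 0` or `G = 0`, as `0⁻¹ = 0`
  rcases eq_or_ne x 0 with rfl | hx
  · simp [simDerivLeft]
  rcases eq_or_ne G 0 with rfl | hG
  · simp only [simDerivLeft, norm_zero, mul_zero, inv_zero, zero_smul, norm_zero]
    positivity
  have hxn : 0 < ‖x‖ := norm_pos_iff.2 hx
  have hGn : 0 < ‖G‖ := norm_pos_iff.2 hG
  have hproj : ‖(⟪x, G⟫_ℝ / ‖x‖ ^ 2) • innerSL ℝ x‖ ≤ ‖G‖ := by
    rw [norm_smul, innerSL_apply_norm, Real.norm_eq_abs, abs_div,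
      abs_of_pos (by positivity : (0 : ℝ) < ‖x‖ ^ 2)]
    calc |⟪x, G⟫_ℝ| / ‖x‖ ^ 2 * ‖x‖ ≤ ‖x‖ * ‖G‖ / ‖x‖ ^ 2 * ‖x‖ := by
          gcongr; exact abs_real_inner_le_norm x G
      _ = ‖G‖ := by field_simp
  calc ‖simDerivLeft x G‖
      = (‖x‖ * ‖G‖)⁻¹ * ‖innerSL ℝ G - (⟪x, G⟫_ℝ / ‖x‖ ^ 2) • innerSL ℝ x‖ := by
        rw [simDerivLeft, norm_smul, norm_inv, norm_mul, norm_norm, norm_norm]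
    _ ≤ (‖x‖ * ‖G‖)⁻¹ * (‖G‖ + ‖G‖) := by
        gcongr
        exact (norm_sub_le _ _).trans (add_le_add (innerSL_apply_norm ℝ G).le hproj)
    _ = 2 / ‖x‖ := by field_simp; ring

theorem sim_comm (F G : E) : sim F G = sim G F := by
  rw [sim, sim, real_inner_comm, mul_comm]

theorem abs_sim_le_one (F G : E) : |sim F G| ≤ 1 := by
  rw [sim, abs_div, abs_of_nonneg (by positivity : (0 : ℝ) ≤ ‖F‖ * ‖G‖)]
  exact div_le_one_of_le₀ (abs_real_inner_le_norm F G) (by positivity)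

end Similarity

section Update

open Function

variable {E ι : Type*} [NormedAddCommGroup E] [InnerProductSpace ℝ E] [DecidableEq ι]

theorem exists_hasFDerivAt_sim_update (F : ι → E) {t i j : ι} (hij : i ≠ j) (ht : F t ≠ 0) :
    ∃ D : E →L[ℝ] ℝ,
      HasFDerivAt (fun v => sim (update F t v i) (update F t v j)) D (F t) ∧
        ‖D‖ ≤ 2 / ‖F t‖ := by
  by_cases hti : t = i
  · subst hti
    refine ⟨simDerivLeft (F t) (F j), ?_, norm_simDerivLeft_le _ _⟩
    simp only [update_self, update_of_ne hij.symm]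
    exact hasFDerivAt_sim_left _ ht
  by_cases htj : t = j
  · subst htj
    refine ⟨simDerivLeft (F t) (F i), ?_, norm_simDerivLeft_le _ _⟩
    simp only [update_self, update_of_ne (Ne.symm hti)]
    simp_rw [sim_comm (F i)]
    exact hasFDerivAt_sim_left _ ht
  refine ⟨0, ?_, by rw [norm_zero]; positivity⟩
  simp only [update_of_ne (Ne.symm hti), update_of_ne (Ne.symm htj)]
  exact hasFDerivAt_const _ _

theorem exists_hasFDerivAt_sq_sub_sim_update (F : ι → E) {t i j k : ι} (hij : i ≠ j)
    (hjk : j ≠ k) (ht : F t ≠ 0) :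
    ∃ D : E →L[ℝ] ℝ,
      HasFDerivAt (fun v => (sim (update F t v j) (update F t v k)
        - sim (update F t v i) (update F t v j)) ^ 2) D (F t) ∧ ‖D‖ ≤ 16 / ‖F t‖ := by
  obtain ⟨D₁, hD₁, hD₁_le⟩ := exists_hasFDerivAt_sim_update F hjk ht
  obtain ⟨D₀, hD₀, hD₀_le⟩ := exists_hasFDerivAt_sim_update F hij ht
  refine ⟨_, (hD₁.sub hD₀).pow 2, ?_⟩
  simp only [Pi.sub_apply, update_eq_self]
  have hdiff : |sim (F j) (F k) - sim (F i) (F j)| ≤ 2 :=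
    (abs_sub _ _).trans (by linarith [abs_sim_le_one (F j) (F k), abs_sim_le_one (F i) (F j)])
  calc ‖(2 • (sim (F j) (F k) - sim (F i) (F j)) ^ (2 - 1)) • (D₁ - D₀)‖
      = 2 * |sim (F j) (F k) - sim (F i) (F j)| * ‖D₁ - D₀‖ := by
        rw [norm_smul]; norm_num
    _ ≤ 2 * 2 * (2 / ‖F t‖ + 2 / ‖F t‖) := by
        gcongr
        exact (norm_sub_le _ _).trans (add_le_add hD₁_le hD₀_le)
    _ = 16 / ‖F t‖ := by ring

end Update

theorem exists_hasFDerivAt_const_mul_sum {E ι : Type*} [NormedAddCommGroup E] [NormedSpace ℝ E]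
    {f : ι → E → ℝ} {x : E} {C : ℝ} (c : ℝ) (s : Finset ι)
    (hf : ∀ i ∈ s, ∃ D : E →L[ℝ] ℝ, HasFDerivAt (f i) D x ∧ ‖D‖ ≤ C) :
    ∃ D : E →L[ℝ] ℝ, HasFDerivAt (fun v => c * ∑ i ∈ s, f i v) D x ∧
      ‖D‖ ≤ |c| * (s.card * C) := by
  choose! D hD hD_le using hf
  refine ⟨c • ∑ i ∈ s, D i, (HasFDerivAt.fun_sum hD).const_mul c, ?_⟩
  rw [norm_smul, Real.norm_eq_abs]
  gcongr
  calc ‖∑ i ∈ s, D i‖ ≤ ∑ i ∈ s, ‖D i‖ := norm_sum_le _ _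
    _ ≤ s.card * C := by simpa using Finset.sum_le_card_nsmul s _ C hD_le

theorem mk_mod_ne_mk_mod {T a b : ℕ} (hT : 0 < T) (ha : a < T) (hb : b < T) (hab : a ≠ b) :
    (⟨a % T, Nat.mod_lt _ hT⟩ : Fin T) ≠ ⟨b % T, Nat.mod_lt _ hT⟩ := by
  rwa [Ne, Fin.mk.injEq, Nat.mod_eq_of_lt ha, Nat.mod_eq_of_lt hb]

theorem exists_hasFDerivAt_temporalLoss_update {E : Type*} [NormedAddCommGroup E]
    [InnerProductSpace ℝ E] {T : ℕ} (hT : 2 ≤ T) (F : Fin T → E) (t : Fin T) (ht : F t ≠ 0) :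
    ∃ D : E →L[ℝ] ℝ,
      HasFDerivAt (fun v => temporalLoss T (by omega) (Function.update F t v)) D (F t) ∧
        ‖D‖ ≤ 16 * ((T : ℝ) - 2) / (((T : ℝ) - 1) * ‖F t‖) := by
  have hT₀ : 0 < T := by omega
  obtain ⟨D, hD, hD_le⟩ : ∃ D : E →L[ℝ] ℝ,
      HasFDerivAt (fun v => temporalLoss T hT₀ (Function.update F t v)) D (F t) ∧
        ‖D‖ ≤ |1 / ((T : ℝ) - 1)| * ((Finset.Ico 1 (T - 1)).card * (16 / ‖F t‖)) := by
    refine exists_hasFDerivAt_const_mul_sum _ _ fun s hs => ?_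
    obtain ⟨hs₁, hs₂⟩ := Finset.mem_Ico.1 hs
    exact exists_hasFDerivAt_sq_sub_sim_update F
      (mk_mod_ne_mk_mod hT₀ (by omega) (by omega) (by omega))
      (mk_mod_ne_mk_mod hT₀ (by omega) (by omega) (by omega)) ht
  refine ⟨D, hD, hD_le.trans_eq ?_⟩
  have hT₁ : (0 : ℝ) < T - 1 := by
    rw [sub_pos, Nat.one_lt_cast]
    omega
  rw [abs_of_pos (one_div_pos.2 hT₁), Nat.card_Ico, Nat.cast_sub (by omega),
    Nat.cast_sub (by omega)]
  field_simp
  ring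

/-- For `T ≥ 3`, `M > 0` and a tuple `F ∈ E^T` with `‖F_s‖ ≥ M` for all
`s`, for each fixed index `t` the map sending the single vector `F_t` (others fixed) to
the temporal consistency loss is differentiable at `F t`, and its gradient satisfies
`‖∇_{F_t} L‖ ≤ 16(T−2)/(M(T−1))`, and in particular `‖∇_{F_t} L‖ ≤ 16/M`. -/
theorem stmt_4 {E : Type*} [NormedAddCommGroup E] [InnerProductSpace ℝ E]
    [FiniteDimensional ℝ E] (T : ℕ) (hT : 3 ≤ T) (M : ℝ) (hM : 0 < M)
    (F : Fin T → E) (hF : ∀ s, M ≤ ‖F s‖) (t : Fin T) :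
    DifferentiableAt ℝ
        (fun v : E => temporalLoss T (by omega) (Function.update F t v)) (F t) ∧
      ‖gradient (fun v : E => temporalLoss T (by omega) (Function.update F t v)) (F t)‖
          ≤ 16 * ((T : ℝ) - 2) / (M * ((T : ℝ) - 1)) ∧
      ‖gradient (fun v : E => temporalLoss T (by omega) (Function.update F t v)) (F t)‖
          ≤ 16 / M := by
  have hFt : F t ≠ 0 := norm_pos_iff.1 (hM.trans_le (hF t))
  obtain ⟨D, hL, hD_le⟩ := exists_hasFDerivAt_temporalLoss_update (by omega) F t hFt
  have hT' : (3 : ℝ) ≤ T := by exact_mod_cast hT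
  have hT₁ : (0 : ℝ) < T - 1 := by linarith
  have hgrad : ‖gradient (fun v : E => temporalLoss T (by omega) (Function.update F t v)) (F t)‖
      ≤ 16 * ((T : ℝ) - 2) / (M * ((T : ℝ) - 1)) := by
    rw [gradient, LinearIsometryEquiv.norm_map, hL.fderiv, mul_comm M]
    refine hD_le.trans ?_
    gcongr
    · linarith
    · exact hF t
  refine ⟨hL.differentiableAt, hgrad, hgrad.trans ?_⟩
  rw [div_le_div_iff₀ (mul_pos hM hT₁) hM]
  nlinarith
end

section
/- Let M, L, d be positive natural numbers, and let X ∈ ℝ^{M×d}, Z, Z* ∈ ℝ^{L×d}, W_Q, W_K, W_V ∈ ℝ^{d×d} with ‖X‖_F ≤ √d and ‖Z*‖₂ ≤ C for some C ≥ 0. Let σ : ℝ^{M×L} → ℝ^{M×L} be Lipschitz with constant L_σ in the Frobenius norm and satisfy ‖σ(A)‖_F ≤ 1 for every A ∈ ℝ^{M×L}. Define Q = X·W_Q, K = Z·W_K, K* = Z*·W_K, ΔZ = Z − Z*, the cross-attention output X̃ = σ(Q·Kᵀ/√d)·Z·W_V, and the ideal output X^out = σ(Q·(K*)ᵀ/√d)·Z*·W_V.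 Then the alignment error satisfies ‖X̃ − X^out‖_F ≤ ( L_σ·C·‖W_Q‖₂·‖W_K‖₂·‖W_V‖₂ + ‖W_V‖₂ )·‖ΔZ‖_F. -/
/-!
With `S = σ(Q Kᵀ/√d)` and `S* = σ(Q K*ᵀ/√d)`, split
`X̃ - X^out = S (ΔZ W_V) + (S - S*) (Z* W_V)`.
The first term is at most `‖ΔZ‖_F ‖W_V‖₂` because `‖S‖_F ≤ 1`. For the second, the Lipschitz
bound on `σ` reduces `‖S - S*‖_F` to the score difference `X W_Q (ΔZ W_K)ᵀ / √d`, which is at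
most `‖W_Q‖₂ ‖W_K‖₂ ‖ΔZ‖_F` since `‖X‖_F ≤ √d`. Each product is estimated by the mixed
inequality `‖A B‖_F ≤ ‖A‖_F ‖B‖₂`, applied row by row, together with `‖A‖₂ ≤ ‖A‖_F`.
-/

open Matrix

/-- Frobenius norm of a real matrix: `‖A‖_F = √(∑ i ∑ j A i j ²)`. -/
noncomputable def frobNorm {m n : Type*} [Fintype m] [Fintype n] (A : Matrix m n ℝ) : ℝ :=
  Real.sqrt (∑ i, ∑ j, (A i j) ^ 2)

/-- Spectral (`ℓ² → ℓ²` operator) norm of a real matrix. -/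
noncomputable def specNorm {m n : Type*} [Fintype m] [Fintype n] [DecidableEq n]
    (A : Matrix m n ℝ) : ℝ :=
  ‖LinearMap.toContinuousLinearMap (Matrix.toEuclideanLin A)‖

variable {l m n p q : Type*} [Fintype l] [Fintype m] [Fintype n] [Fintype p] [Fintype q]

section Frobenius

attribute [local instance] Matrix.frobeniusSeminormedAddCommGroup Matrix.frobeniusNormedSpace

theorem frobNorm_eq_norm (A : Matrix m n ℝ) : frobNorm A = ‖A‖ := by
  simp only [frobNorm, frobenius_norm_def, Real.norm_eq_abs, Real.rpow_two, sq_abs,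
    Real.sqrt_eq_rpow]

theorem frobNorm_nonneg (A : Matrix m n ℝ) : 0 ≤ frobNorm A :=
  Real.sqrt_nonneg _

theorem frobNorm_add_le (A B : Matrix m n ℝ) : frobNorm (A + B) ≤ frobNorm A + frobNorm B := by
  simpa only [frobNorm_eq_norm] using norm_add_le A B

theorem frobNorm_smul (c : ℝ) (A : Matrix m n ℝ) : frobNorm (c • A) = |c| * frobNorm A := by
  simp only [frobNorm_eq_norm, norm_smul, Real.norm_eq_abs]

theorem norm_mulVec_le_frobNorm_mul (A : Matrix m n ℝ) (x : n → ℝ) :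
    ‖WithLp.toLp 2 (A *ᵥ x)‖ ≤ frobNorm A * ‖WithLp.toLp 2 x‖ := by
  simpa only [← frobenius_norm_replicateCol (ι := Unit), replicateCol_mulVec, frobNorm_eq_norm]
    using frobenius_norm_mul A (replicateCol Unit x)

end Frobenius

theorem frobNorm_sq_eq_sum_norm_row_sq (A : Matrix m n ℝ) :
    frobNorm A ^ 2 = ∑ i, ‖WithLp.toLp 2 (A i)‖ ^ 2 := by
  simp only [frobNorm, Real.sq_sqrt (by positivity : (0:ℝ) ≤ ∑ i, ∑ j, A i j ^ 2),
    EuclideanSpace.norm_sq_eq, Real.norm_eq_abs, sq_abs]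

section Spectral

open scoped Matrix.Norms.L2Operator

theorem specNorm_nonneg [DecidableEq n] (A : Matrix m n ℝ) : 0 ≤ specNorm A :=
  norm_nonneg _

theorem specNorm_mul_le [DecidableEq n] [DecidableEq p] (A : Matrix m n ℝ) (B : Matrix n p ℝ) :
    specNorm (A * B) ≤ specNorm A * specNorm B :=
  l2_opNorm_mul A B

theorem specNorm_transpose [DecidableEq m] [DecidableEq n] (A : Matrix m n ℝ) :
    specNorm Aᵀ = specNorm A := by
  rw [← conjTranspose_eq_transpose_of_trivial]
  exact l2_opNorm_conjTranspose A

theorem specNorm_le_frobNorm [DecidableEq n] (A : Matrix m n ℝ) : specNorm A ≤ frobNorm A :=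
  ContinuousLinearMap.opNorm_le_bound _ (frobNorm_nonneg A) fun x =>
    norm_mulVec_le_frobNorm_mul A x.ofLp

theorem frobNorm_mul_le [DecidableEq n] [DecidableEq p] (A : Matrix m n ℝ) (B : Matrix n p ℝ) :
    frobNorm (A * B) ≤ frobNorm A * specNorm B := by
  have hrow (i : m) : ‖WithLp.toLp 2 ((A * B) i)‖ ≤ specNorm B * ‖WithLp.toLp 2 (A i)‖ := by
    rw [mul_apply_eq_vecMul, ← mulVec_transpose, ← specNorm_transpose]
    exact l2_opNorm_mulVec Bᵀ (WithLp.toLp 2 (A i))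
  have hsq : frobNorm (A * B) ^ 2 ≤ (frobNorm A * specNorm B) ^ 2 := by
    rw [mul_pow, frobNorm_sq_eq_sum_norm_row_sq, frobNorm_sq_eq_sum_norm_row_sq, Finset.sum_mul]
    gcongr with i
    simpa only [mul_pow, mul_comm] using pow_le_pow_left₀ (norm_nonneg _) (hrow i) 2
  exact (pow_le_pow_iff_left₀ (frobNorm_nonneg _)
    (mul_nonneg (frobNorm_nonneg A) (specNorm_nonneg B)) two_ne_zero).1 hsq

end Spectral

theorem frobNorm_mul_sub_mul_le [DecidableEq n] [DecidableEq p] (S S' : Matrix m n ℝ)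
    (P P' : Matrix n p ℝ) :
    frobNorm (S * P - S' * P')
      ≤ frobNorm S * specNorm (P - P') + frobNorm (S - S') * specNorm P' := by
  have hsplit : S * P - S' * P' = S * (P - P') + (S - S') * P' := by
    rw [Matrix.mul_sub, Matrix.sub_mul]; abel
  rw [hsplit]
  exact (frobNorm_add_le _ _).trans (add_le_add (frobNorm_mul_le _ _) (frobNorm_mul_le _ _))

theorem frobNorm_mul_mul_transpose_le [DecidableEq l] [DecidableEq n] [DecidableEq p]
    [DecidableEq q] (X : Matrix m n ℝ) (A : Matrix n p ℝ) (D : Matrix l q ℝ) (B : Matrix q p ℝ) :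
    frobNorm (X * A * (D * B)ᵀ) ≤ frobNorm X * specNorm A * (specNorm D * specNorm B) := by
  grw [frobNorm_mul_le, specNorm_transpose]
  exact mul_le_mul (frobNorm_mul_le X A) (specNorm_mul_le D B) (specNorm_nonneg _)
    (mul_nonneg (frobNorm_nonneg X) (specNorm_nonneg A))

theorem frobNorm_smul_mul_mul_transpose_sub_le [DecidableEq l] [DecidableEq n] [DecidableEq p]
    [DecidableEq q] {c : ℝ} {X : Matrix m n ℝ} (hcX : |c| * frobNorm X ≤ 1) (A : Matrix n p ℝ)
    (D D' : Matrix l q ℝ) (B : Matrix q p ℝ) :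
    frobNorm (c • (X * A * (D * B)ᵀ) - c • (X * A * (D' * B)ᵀ))
      ≤ specNorm A * specNorm B * frobNorm (D - D') := by
  have hAB : 0 ≤ specNorm A * specNorm B := mul_nonneg (specNorm_nonneg A) (specNorm_nonneg B)
  rw [← smul_sub, ← Matrix.mul_sub, ← transpose_sub, ← Matrix.sub_mul, frobNorm_smul]
  grw [frobNorm_mul_mul_transpose_le]
  calc _ = (|c| * frobNorm X) * (specNorm A * specNorm B * specNorm (D - D')) := by ring
    _ ≤ 1 * (specNorm A * specNorm B * frobNorm (D - D')) :=
        mul_le_mul hcX (mul_le_mul_of_nonneg_left (specNorm_le_frobNorm _) hAB)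
          (mul_nonneg hAB (specNorm_nonneg _)) zero_le_one
    _ = _ := one_mul _

theorem stmt_16_general (M L d : ℕ)
    (X : Matrix (Fin M) (Fin d) ℝ) (hX : frobNorm X ≤ Real.sqrt d)
    (Z Zstar : Matrix (Fin L) (Fin d) ℝ)
    (WQ WK WV : Matrix (Fin d) (Fin d) ℝ)
    (C : ℝ) (hZstar : specNorm Zstar ≤ C)
    (σ : Matrix (Fin M) (Fin L) ℝ → Matrix (Fin M) (Fin L) ℝ)
    (Lσ : ℝ) (hLσ : 0 ≤ Lσ)
    (hlip : ∀ A B : Matrix (Fin M) (Fin L) ℝ,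
      frobNorm (σ A - σ B) ≤ Lσ * frobNorm (A - B))
    (hσ : ∀ A : Matrix (Fin M) (Fin L) ℝ, frobNorm (σ A) ≤ 1) :
    frobNorm (σ ((1 / Real.sqrt d) • (X * WQ * (Z * WK)ᵀ)) * (Z * WV)
          - σ ((1 / Real.sqrt d) • (X * WQ * (Zstar * WK)ᵀ)) * (Zstar * WV))
      ≤ (Lσ * C * specNorm WQ * specNorm WK * specNorm WV + specNorm WV)
          * frobNorm (Z - Zstar) := by
  have hscale : |1 / Real.sqrt d| * frobNorm X ≤ 1 := by
    rw [abs_of_nonneg (by positivity), one_div_mul_eq_div]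
    exact div_le_one_of_le₀ hX (Real.sqrt_nonneg _)
  have hscore := frobNorm_smul_mul_mul_transpose_sub_le hscale WQ Z Zstar WK
  have hvalue : specNorm (Z * WV - Zstar * WV) ≤ frobNorm (Z - Zstar) * specNorm WV := by
    rw [← Matrix.sub_mul]
    exact (specNorm_mul_le _ _).trans
      (mul_le_mul_of_nonneg_right (specNorm_le_frobNorm _) (specNorm_nonneg WV))
  have hvalue_star : specNorm (Zstar * WV) ≤ C * specNorm WV :=
    (specNorm_mul_le _ _).trans (mul_le_mul_of_nonneg_right hZstar (specNorm_nonneg WV))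
  have hscore_nonneg : 0 ≤ specNorm WQ * specNorm WK * frobNorm (Z - Zstar) :=
    (frobNorm_nonneg _).trans hscore
  calc _ ≤ 1 * (frobNorm (Z - Zstar) * specNorm WV)
        + Lσ * (specNorm WQ * specNorm WK * frobNorm (Z - Zstar)) * (C * specNorm WV) := by
        refine (frobNorm_mul_sub_mul_le _ _ _ _).trans (add_le_add ?_ ?_)
        · exact mul_le_mul (hσ _) hvalue (specNorm_nonneg _) zero_le_one
        · exact mul_le_mul ((hlip _ _).trans (mul_le_mul_of_nonneg_left hscore hLσ)) hvalue_star
            (specNorm_nonneg _) (mul_nonneg hLσ hscore_nonneg)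
    _ = _ := by ring

/-- (Combined alignment error bound for cross-attention.)
With `‖X‖_F ≤ √d`, `‖Z*‖₂ ≤ C`, `σ` `L_σ`-Lipschitz in Frobenius norm and
`‖σ(A)‖_F ≤ 1` for all `A`, setting `Q = X·W_Q`, `K = Z·W_K`, `K* = Z*·W_K`,
`ΔZ = Z − Z*`, `X̃ = σ(Q·Kᵀ/√d)·Z·W_V` and `X^out = σ(Q·(K*)ᵀ/√d)·Z*·W_V`:
`‖X̃ − X^out‖_F ≤ (L_σ·C·‖W_Q‖₂·‖W_K‖₂·‖W_V‖₂ + ‖W_V‖₂)·‖ΔZ‖_F`. -/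
theorem stmt_16 (M L d : ℕ) (hM : 0 < M) (hL : 0 < L) (hd : 0 < d)
    (X : Matrix (Fin M) (Fin d) ℝ) (hX : frobNorm X ≤ Real.sqrt d)
    (Z Zstar : Matrix (Fin L) (Fin d) ℝ)
    (WQ WK WV : Matrix (Fin d) (Fin d) ℝ)
    (C : ℝ) (hC : 0 ≤ C) (hZstar : specNorm Zstar ≤ C)
    (σ : Matrix (Fin M) (Fin L) ℝ → Matrix (Fin M) (Fin L) ℝ)
    (Lσ : ℝ) (hLσ : 0 ≤ Lσ)
    (hlip : ∀ A B : Matrix (Fin M) (Fin L) ℝ,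
      frobNorm (σ A - σ B) ≤ Lσ * frobNorm (A - B))
    (hσ : ∀ A : Matrix (Fin M) (Fin L) ℝ, frobNorm (σ A) ≤ 1) :
    frobNorm (σ ((1 / Real.sqrt d) • (X * WQ * (Z * WK)ᵀ)) * (Z * WV)
          - σ ((1 / Real.sqrt d) • (X * WQ * (Zstar * WK)ᵀ)) * (Zstar * WV))
      ≤ (Lσ * C * specNorm WQ * specNorm WK * specNorm WV + specNorm WV)
          * frobNorm (Z - Zstar) :=
  stmt_16_general M L d X hX Z Zstar WQ WK WV C hZstar σ Lσ hLσ hlip hσ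
end
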